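/- arXiv:2506.00024 — 2 statements merged into one kernel-verified Lean document; each statement's English description precedes it below -/
import Mathlib

section
/- Let N be a subgyrogroup of a gyrogroup G. Then N is normal in G (i.e., a⊕(N⊕b) = (a⊕b)⊕N = (a⊕N)⊕b for all a,b ∈ G) if and only if both: (1) gyr[a,b](N) ⊆ N for all a,b ∈ G, and (2) ⊖(a⊕b) ⊕ ((N⊕a)⊕b) = N for all a,b ∈ G. -/
open Pointwise

/-- A gyrogroup: a groupoid with identity, inverses, gyroautomorphisms satisfying
the left gyroassociative law and the left loop property. -/
class Gyrogroup (G : Type*) extends Zero G, Neg G, Add G where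
  zero_add : ∀ a : G, 0 + a = a
  add_zero : ∀ a : G, a + 0 = a
  neg_add_cancel : ∀ a : G, -a + a = 0
  add_neg_cancel : ∀ a : G, a + -a = 0
  gyr : G → G → G → G
  gyr_bijective : ∀ a b : G, Function.Bijective (gyr a b)
  gyr_add : ∀ a b x y : G, gyr a b (x + y) = gyr a b x + gyr a b y
  gyrassoc : ∀ a b c : G, a + (b + c) = a + b + gyr a b c
  loop : ∀ a b : G, gyr (a + b) b = gyr a b

/-- A subgyrogroup: nonempty subset closed under ⊕ and ⊖, on which each gyr[a,b]
(a, b in the subset) restricts to an automorphism. -/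
structure Subgyrogroup (G : Type*) [Gyrogroup G] where
  carrier : Set G
  zero_mem : (0 : G) ∈ carrier
  add_mem : ∀ ⦃a b : G⦄, a ∈ carrier → b ∈ carrier → a + b ∈ carrier
  neg_mem : ∀ ⦃a : G⦄, a ∈ carrier → -a ∈ carrier
  gyr_image : ∀ ⦃a b : G⦄, a ∈ carrier → b ∈ carrier →
    Gyrogroup.gyr a b '' carrier = carrier

/-!
Gyroassociativity lifts to cosets as `a ⊕ (b ⊕ N) = (a ⊕ b) ⊕ gyr[a,b] N`, and left cosets of a
singleton cancel. Taking `a = 0` in the normality equations makes left and right cosets agree, after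
which normality says exactly `(a ⊕ b) ⊕ gyr[a,b] N = (a ⊕ b) ⊕ N` and `(N ⊕ a) ⊕ b = (a ⊕ b) ⊕ N`,
i.e. conditions (1) and (2). For the converse, an invariance `gyr[a,b] N ⊆ N` holding for all `a, b`
is an equality, because `gyr[a,b]` has the left inverse `gyr[a ⊕ b, gyr[a,b](⊖b)]`.
-/

namespace Gyrogroup

variable {G : Type*} [Gyrogroup G]

theorem neg_add_add_eq_gyr (a x : G) : -a + (a + x) = gyr (-a) a x := by
  rw [gyrassoc, Gyrogroup.neg_add_cancel, Gyrogroup.zero_add]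

theorem add_left_cancel {a x y : G} (h : a + x = a + y) : x = y :=
  (gyr_bijective (-a) a).1 <| by rw [← neg_add_add_eq_gyr, ← neg_add_add_eq_gyr, h]

theorem gyr_zero_left (b x : G) : gyr 0 b x = x := by
  have h := gyrassoc (0 : G) b x
  rw [Gyrogroup.zero_add, Gyrogroup.zero_add] at h
  exact (add_left_cancel h).symm

theorem gyr_of_add_eq_zero {a b : G} (h : a + b = 0) (x : G) : gyr a b x = x := by
  rw [← loop, h, gyr_zero_left]

theorem neg_add_cancel_left (a x : G) : -a + (a + x) = x := by
  rw [neg_add_add_eq_gyr, gyr_of_add_eq_zero (Gyrogroup.neg_add_cancel a)]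

theorem add_neg_cancel_left (a x : G) : a + (-a + x) = x := by
  rw [gyrassoc, Gyrogroup.add_neg_cancel, Gyrogroup.zero_add,
    gyr_of_add_eq_zero (Gyrogroup.add_neg_cancel a)]

theorem leftInverse_gyr (a b : G) :
    Function.LeftInverse (gyr (a + b) (gyr a b (-b))) (gyr a b) := fun x => by
  have hab : (a + b) + gyr a b (-b) = a := by
    rw [← gyrassoc, Gyrogroup.add_neg_cancel, Gyrogroup.add_zero]
  apply add_left_cancel (a := a)
  calc a + gyr (a + b) (gyr a b (-b)) (gyr a b x)
      = ((a + b) + gyr a b (-b)) + gyr (a + b) (gyr a b (-b)) (gyr a b x) := by rw [hab]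
    _ = (a + b) + gyr a b (-b + x) := by rw [← gyrassoc, gyr_add]
    _ = a + x := by rw [← gyrassoc, add_neg_cancel_left]

theorem gyr_image_eq_of_forall_subset {S : Set G} (h : ∀ a b : G, gyr a b '' S ⊆ S) (a b : G) :
    gyr a b '' S = S := by
  refine (h a b).antisymm fun x hx => ⟨gyr (a + b) (gyr a b (-b)) x, h _ _ ⟨x, hx, rfl⟩, ?_⟩
  exact (leftInverse_gyr a b).rightInverse_of_surjective (gyr_bijective a b).2 x

theorem singleton_add_singleton_add (a b : G) (S : Set G) :
    ({a} : Set G) + ({b} + S) = {a + b} + gyr a b '' S := by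
  simp only [Set.singleton_add, Set.image_image, gyrassoc]

theorem singleton_zero_add (S : Set G) : ({0} : Set G) + S = S := by
  simp only [Set.singleton_add, Gyrogroup.zero_add, Set.image_id']

theorem add_singleton_zero (S : Set G) : S + ({0} : Set G) = S := by
  simp only [Set.add_singleton, Gyrogroup.add_zero, Set.image_id']

theorem singleton_neg_add_singleton_add (c : G) (S : Set G) :
    ({-c} : Set G) + ({c} + S) = S := by
  simp only [Set.singleton_add, Set.image_image, neg_add_cancel_left, Set.image_id']

theorem singleton_add_singleton_neg_add (c : G) (S : Set G) :
    ({c} : Set G) + ({-c} + S) = S := by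
  simp only [Set.singleton_add, Set.image_image, add_neg_cancel_left, Set.image_id']

theorem singleton_add_left_cancel {c : G} {S T : Set G} (h : ({c} : Set G) + S = {c} + T) :
    S = T := by
  rw [← singleton_neg_add_singleton_add c S, h, singleton_neg_add_singleton_add]

end Gyrogroup

open Gyrogroup in
/-- N is normal in G (a⊕(N⊕b) = (a⊕b)⊕N = (a⊕N)⊕b for all a,b) iff
gyr[a,b](N) ⊆ N for all a,b and ⊖(a⊕b)⊕((N⊕a)⊕b) = N for all a,b. -/
theorem subgyrogroup_normal_iff {G : Type*} [Gyrogroup G] (N : Subgyrogroup G) :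
    (∀ a b : G, {a} + (N.carrier + {b}) = {a + b} + N.carrier ∧
        {a + b} + N.carrier = ({a} + N.carrier) + {b}) ↔
      ((∀ a b : G, Gyrogroup.gyr a b '' N.carrier ⊆ N.carrier) ∧
        (∀ a b : G, {-(a + b)} + ((N.carrier + {a}) + {b}) = N.carrier)) := by
  constructor
  · intro hN
    have hcomm (b : G) : N.carrier + {b} = {b} + N.carrier := by
      simpa only [singleton_zero_add, Gyrogroup.zero_add] using (hN 0 b).1
    have hgyr (a b : G) : gyr a b '' N.carrier = N.carrier := by
      apply singleton_add_left_cancel (c := a + b)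
      rw [← singleton_add_singleton_add, ← hcomm, (hN a b).1]
    refine ⟨fun a b => (hgyr a b).subset, fun a b => ?_⟩
    rw [hcomm a, ← (hN a b).2, singleton_neg_add_singleton_add]
  · rintro ⟨hgyr, hright⟩
    have hcoset (a b : G) : (N.carrier + {a}) + {b} = {a + b} + N.carrier :=
      (singleton_add_singleton_neg_add _ _).symm.trans (congrArg _ (hright a b))
    have hcomm (a : G) : N.carrier + {a} = {a} + N.carrier := by
      simpa only [add_singleton_zero, Gyrogroup.add_zero] using hcoset a 0
    refine fun a b => ⟨?_, ?_⟩
    · rw [hcomm b, singleton_add_singleton_add, gyr_image_eq_of_forall_subset hgyr]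
    · rw [← hcomm a, hcoset]
end

section
/- For every T₁ paratopological gyrogroup G, wHs(G) ≤ l(G), the Lindelöf number of G. -/
open Pointwise

/-- The weakly Hausdorff number: the minimum cardinal κ such that every neighborhood U of 0
admits a family γ of neighborhoods of 0 with |γ| ≤ κ and ⋂_{V∈γ}(⊖V) ⊆ U. -/
noncomputable def wHs (G : Type*) [Zero G] [Neg G] [TopologicalSpace G] : Cardinal :=
  sInf {κ : Cardinal | ∀ U ∈ nhds (0 : G), ∃ γ : Set (Set G),
    (∀ V ∈ γ, V ∈ nhds (0 : G)) ∧ Cardinal.mk γ ≤ κ ∧ (⋂ V ∈ γ, -V) ⊆ U}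

/-- The Lindelöf number of a space: the least infinite cardinal κ such that every open
cover has a subcover of cardinality at most κ. -/
noncomputable def LindelofNumber (X : Type*) [TopologicalSpace X] : Cardinal :=
  sInf {κ : Cardinal | Cardinal.aleph0 ≤ κ ∧ ∀ C : Set (Set X), (∀ U ∈ C, IsOpen U) →
    ⋃₀ C = Set.univ → ∃ D ⊆ C, Cardinal.mk D ≤ κ ∧ ⋃₀ D = Set.univ}

/-!
For `x ≠ 0`, continuity of `(w, y) ↦ w ⊕ y` at `(0, x)` gives neighbourhoods `W` of `0` and `O`
of `x` with `w ⊕ y ≠ 0` on `W × O`; since `⊖y ⊕ y = 0`, `O` misses `⊖W`. Hence, for a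
neighbourhood `U` of `0`, the open sets `S` admitting some `V ∈ 𝓝 0` with `S ∩ ⊖V ⊆ U` cover
`G` (at `0` take `S = interior U`, `V = G`). A subcover of size `≤ l(G)` then gives a family of
`≤ l(G)` neighbourhoods `V` with `⋂ ⊖V ⊆ U`.
-/

open Set Topology
open scoped Cardinal

theorem LindelofNumber.exists_subcover {X : Type*} [TopologicalSpace X] {C : Set (Set X)}
    (hC_open : ∀ U ∈ C, IsOpen U) (hC : ⋃₀ C = univ) :
    ∃ D ⊆ C, #D ≤ LindelofNumber X ∧ ⋃₀ D = univ := by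
  have hne : {κ : Cardinal | ℵ₀ ≤ κ ∧ ∀ C : Set (Set X), (∀ U ∈ C, IsOpen U) →
      ⋃₀ C = univ → ∃ D ⊆ C, #D ≤ κ ∧ ⋃₀ D = univ}.Nonempty :=
    ⟨max ℵ₀ #(Set X), le_max_left _ _,
      fun C _ hC => ⟨C, subset_rfl, le_max_of_le_right (Cardinal.mk_set_le C), hC⟩⟩
  exact (csInf_mem hne).2 C hC_open hC

namespace Gyrogroup

variable {G : Type*} [Gyrogroup G] [TopologicalSpace G] [ContinuousAdd G] [T1Space G]

theorem exists_nhds_zero_notMem_closure_neg {x : G} (hx : x ≠ 0) :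
    ∃ W ∈ 𝓝 (0 : G), x ∉ closure (-W) := by
  have hsum : ∀ᶠ p in 𝓝 ((0 : G), x), p.1 + p.2 ≠ 0 :=
    continuous_add.continuousAt.eventually_ne (by rwa [Gyrogroup.zero_add])
  obtain ⟨W, hW, O, hO, hWO⟩ := mem_nhds_prod_iff.1 hsum
  refine ⟨W, hW, fun hx_cl => ?_⟩
  obtain ⟨y, hyO, hyW⟩ := mem_closure_iff_nhds.1 hx_cl O hO
  exact @hWO (-y, y) ⟨hyW, hyO⟩ (Gyrogroup.neg_add_cancel y)

theorem exists_isOpen_mem_inter_neg_subset {U : Set G} (hU : U ∈ 𝓝 (0 : G)) (x : G) :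
    ∃ S, IsOpen S ∧ x ∈ S ∧ ∃ V ∈ 𝓝 (0 : G), S ∩ -V ⊆ U := by
  by_cases hx : x = 0
  · subst hx
    exact ⟨interior U, isOpen_interior, mem_interior_iff_mem_nhds.2 hU,
      univ, Filter.univ_mem, fun z hz => interior_subset hz.1⟩
  · obtain ⟨W, hW, hxW⟩ := exists_nhds_zero_notMem_closure_neg hx
    exact ⟨(closure (-W))ᶜ, isClosed_closure.isOpen_compl, hxW,
      W, hW, fun z hz => absurd (subset_closure hz.2) hz.1⟩

end Gyrogroup

/-- For every T₁ paratopological gyrogroup G, wHs(G) ≤ l(G). -/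
theorem wHs_le_lindelofNumber {G : Type*} [Gyrogroup G] [TopologicalSpace G]
    [ContinuousAdd G] [T1Space G] : wHs G ≤ LindelofNumber G := by
  refine csInf_le' fun U hU => ?_
  obtain ⟨D, hDC, hD_card, hD_cover⟩ :=
    LindelofNumber.exists_subcover (C := {S | IsOpen S ∧ ∃ V ∈ 𝓝 (0 : G), S ∩ -V ⊆ U})
      (fun S hS => hS.1) <| eq_univ_of_forall fun x => by
        obtain ⟨S, hS_open, hxS, hS⟩ := Gyrogroup.exists_isOpen_mem_inter_neg_subset hU x
        exact ⟨S, ⟨hS_open, hS⟩, hxS⟩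
  choose V hV hVU using fun S : D => (hDC S.2).2
  refine ⟨range V, forall_mem_range.2 hV, Cardinal.mk_range_le.trans hD_card, fun z hz => ?_⟩
  obtain ⟨S, hSD, hzS⟩ := mem_sUnion.1 (hD_cover ▸ mem_univ z)
  exact hVU ⟨S, hSD⟩ ⟨hzS, mem_iInter₂.1 hz _ (mem_range_self _)⟩
end
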